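/- arXiv:1012.3909 — 6 statements merged into one kernel-verified Lean document; each statement's English description precedes it below -/
import Mathlib

section
/- Let μ be the uniform distribution on [-1,1], with C(s) = (s-1)^2/4 for s in [-1,1] and P(a) = (a+1)^2/4 for a in [-1,1]. Then for each s in (0,1], the unique root α in [-1,0) of the equation P'(α)(s-α) = C(s) - P(α) is α = s - 2√s. -/
open Set

/-!
Clearing denominators, the tangency equation `(α + 1)/2 · (s - α) = (s - 1)²/4 - (α + 1)²/4`
becomes `(α - s)² = 4s`, whose roots are `s ± 2√s`; only `s - 2√s` lies below `s`.
Since `P` is only prescribed on `[-1, 1]`, at the endpoint `α = -1` the value `deriv P (-1)` is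
either the one-sided derivative of `(a + 1)²/4` or the junk value, and both are `0`.
-/

lemma deriv_eq_zero_of_eqOn_Icc_of_hasDerivAt_left {f g : ℝ → ℝ} {a b : ℝ} (hab : a < b)
    (hfg : EqOn f g (Icc a b)) (hg : HasDerivAt g 0 a) : deriv f a = 0 := by
  by_cases hf : DifferentiableAt ℝ f a
  · have ha : a ∈ Icc a b := left_mem_Icc.2 hab.le
    have hu : UniqueDiffWithinAt ℝ (Icc a b) a := uniqueDiffOn_Icc hab a ha
    rw [← hf.hasDerivAt.hasDerivWithinAt.derivWithin hu,
      (hg.hasDerivWithinAt.congr hfg (hfg ha)).derivWithin hu]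
  · exact deriv_zero_of_not_differentiableAt hf

lemma hasDerivAt_add_one_sq_div_four (x : ℝ) :
    HasDerivAt (fun a : ℝ => (a + 1) ^ 2 / 4) ((x + 1) / 2) x := by
  refine ((((hasDerivAt_id x).add_const 1).pow 2).div_const 4).congr_deriv ?_
  simp only [id, Nat.cast_ofNat]
  ring

lemma deriv_eq_add_one_div_two_of_eqOn_Icc {P : ℝ → ℝ}
    (hP : EqOn P (fun a => (a + 1) ^ 2 / 4) (Icc (-1) 1)) {α : ℝ} (hα : α ∈ Ico (-1) 1) :
    deriv P α = (α + 1) / 2 := by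
  rcases hα.1.eq_or_lt with rfl | hlt
  · rw [deriv_eq_zero_of_eqOn_Icc_of_hasDerivAt_left (by norm_num) hP
      (by simpa using hasDerivAt_add_one_sq_div_four (-1))]
    norm_num
  · rw [(Filter.eventuallyEq_of_mem (Icc_mem_nhds hlt hα.2) hP).deriv_eq,
      (hasDerivAt_add_one_sq_div_four α).deriv]

lemma sub_sq_eq_four_mul_iff {s α : ℝ} (hs : 0 ≤ s) (hαs : α ≤ s) :
    (α - s) ^ 2 = 4 * s ↔ α = s - 2 * √s :=
  calc (α - s) ^ 2 = 4 * s ↔ (s - α) ^ 2 = (2 * √s) ^ 2 := by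
        rw [mul_pow, Real.sq_sqrt hs]; ring_nf
    _ ↔ s - α = 2 * √s := sq_eq_sq₀ (by linarith) (by positivity)
    _ ↔ α = s - 2 * √s := by constructor <;> intro h <;> linarith

/-- For μ = Uniform[-1,1] with call function `C(s) = (s-1)²/4` and put function
`P(a) = (a+1)²/4`, for each `s ∈ (0,1]` the unique root `α ∈ [-1,0)` of the
Perkins tangency equation `P'(α)(s-α) = C(s) - P(α)` is `α = s - 2√s`. -/
theorem stmt_4 (C P : ℝ → ℝ)
    (hC : ∀ s ∈ Icc (-1 : ℝ) 1, C s = (s - 1) ^ 2 / 4)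
    (hP : ∀ a ∈ Icc (-1 : ℝ) 1, P a = (a + 1) ^ 2 / 4) :
    ∀ s ∈ Ioc (0 : ℝ) 1, ∀ α ∈ Ico (-1 : ℝ) 0,
      (deriv P α * (s - α) = C s - P α ↔ α = s - 2 * Real.sqrt s) := by
  rintro s ⟨hs0, hs1⟩ α ⟨hα1, hα0⟩
  rw [deriv_eq_add_one_div_two_of_eqOn_Icc hP ⟨hα1, by linarith⟩, hC s ⟨by linarith, hs1⟩,
    hP α ⟨hα1, by linarith⟩, ← sub_sq_eq_four_mul_iff hs0.le (by linarith)]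
  constructor <;> intro h <;> linarith
end

section
/- Suppose F satisfies F-MON↑ (F_s(w,s)/(s-w) increasing in w), and let α⁺: ℝ₊ → ℝ₋ be nonincreasing with inverse a⁺; set ā(w) = w for w ≥ 0 and ā(w) = a⁺(w) for w < 0. Define λ_{α⁺}(r) = F_s(α⁺(r),r)/(r - α⁺(r)), Φ_{α⁺}(w,s) = ∫_0^s λ_{α⁺}(r)(r-w) dr and ξ_{α⁺}(w) = F(w, ā(w)) - Φ_{α⁺}(w, ā(w)). Then for all w ≤ s, ξ_{α⁺}(w) + Φ_{α⁺}(w,s) ≤ F(w,s), with equality at w = s and at w = α⁺(s). -/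
open MeasureTheory Set intervalIntegral
open scoped Interval

/-! Put `t = ā(w)`. By the fundamental theorem of calculus,
`F(w,s) - ξ(w) - Φ(w,s) = ∫_t^s (F_s(w,r) - λ(r)(r-w)) dr`.
For `r > t` one has `α⁺(r) ≤ w`, so F-MON↑ gives `λ(r) ≤ F_s(w,r)/(r-w)` and the integrand is
nonnegative; for `s < r < t` one has `w ≤ α⁺(r)`, the integrand is nonpositive, and this is the
right sign on the reversed interval. At `w = α⁺(s)`, `α⁺` is constantly `w` between `t` and `s`,
so the integrand vanishes. -/

theorem intervalIntegral.integral_nonneg_of_nonneg_Ioo_of_nonpos_Ioo {μ : Measure ℝ}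
    [NullSingletonClass μ] {f : ℝ → ℝ} {a b : ℝ} (h₁ : ∀ x ∈ Ioo a b, 0 ≤ f x)
    (h₂ : ∀ x ∈ Ioo b a, f x ≤ 0) : 0 ≤ ∫ x in a..b, f x ∂μ := by
  rcases le_total a b with hab | hba
  · rw [integral_of_le hab, integral_Ioc_eq_integral_Ioo]
    exact setIntegral_nonneg measurableSet_Ioo h₁
  · rw [integral_symm, integral_of_le hba, integral_Ioc_eq_integral_Ioo, neg_nonneg]
    exact setIntegral_nonpos measurableSet_Ioo h₂

theorem sub_integral_add_integral_eq_sub_integral {f f' g : ℝ → ℝ} {t s : ℝ}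
    (hf : ∀ r ∈ [[t, s]], HasDerivAt f (f' r) r) (hf' : IntervalIntegrable f' volume t s)
    (hgt : IntervalIntegrable g volume 0 t) (hgs : IntervalIntegrable g volume 0 s) :
    (f t - ∫ r in 0..t, g r) + ∫ r in 0..s, g r = f s - ∫ r in t..s, (f' r - g r) := by
  rw [integral_sub hf' (hgt.symm.trans hgs), integral_eq_sub_of_hasDerivAt hf hf',
    ← integral_interval_sub_left hgs hgt]
  ring

section Abar

variable {α a abar : ℝ → ℝ} {w r : ℝ}

theorem abar_nonneg (ha_nonneg : ∀ w : ℝ, w < 0 → 0 ≤ a w)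
    (habar : abar w = if 0 ≤ w then w else a w) : 0 ≤ abar w := by
  rw [habar]
  split_ifs with hw
  · exact hw
  · exact ha_nonneg w (not_le.1 hw)

theorem le_abar (ha_nonneg : ∀ w : ℝ, w < 0 → 0 ≤ a w)
    (habar : abar w = if 0 ≤ w then w else a w) : w ≤ abar w := by
  by_cases hw : 0 ≤ w
  · rw [habar, if_pos hw]
  · exact (not_le.1 hw).le.trans (abar_nonneg ha_nonneg habar)

theorem alpha_le_of_abar_lt (hαle : ∀ s : ℝ, 0 ≤ s → α s ≤ 0)
    (hinv1 : ∀ w r : ℝ, w < 0 → a w < r → α r ≤ w)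
    (habar : abar w = if 0 ≤ w then w else a w) (hr : 0 ≤ r) (hwr : abar w < r) :
    α r ≤ w := by
  rw [habar] at hwr
  split_ifs at hwr with hw
  · exact (hαle r hr).trans hw
  · exact hinv1 w r (not_le.1 hw) hwr

theorem le_alpha_of_lt_abar (hinv2 : ∀ w r : ℝ, w < 0 → 0 ≤ r → r < a w → w ≤ α r)
    (habar : abar w = if 0 ≤ w then w else a w) (hr : 0 ≤ r) (hwr : w < r)
    (hrw : r < abar w) : w ≤ α r := by
  rw [habar] at hrw
  split_ifs at hrw with hw
  · exact absurd hwr (not_lt.2 hrw.le)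
  · exact hinv2 w r (not_le.1 hw) hr hrw

theorem alpha_eq_of_mem_uIoo (hαanti : AntitoneOn α (Ici (0 : ℝ)))
    (hαle : ∀ s : ℝ, 0 ≤ s → α s ≤ 0) (ha_nonneg : ∀ w : ℝ, w < 0 → 0 ≤ a w)
    (hinv1 : ∀ w r : ℝ, w < 0 → a w < r → α r ≤ w)
    (hinv2 : ∀ w r : ℝ, w < 0 → 0 ≤ r → r < a w → w ≤ α r)
    (habar : ∀ w, abar w = if 0 ≤ w then w else a w) {s : ℝ} (hs : 0 ≤ s)
    (hr : r ∈ uIoo (abar (α s)) s) : α r = α s := by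
  have ht : 0 ≤ abar (α s) := abar_nonneg ha_nonneg (habar _)
  have hr0 : 0 < r := (le_inf ht hs).trans_lt hr.1
  rcases lt_trichotomy r s with hrs | rfl | hsr
  · have htr : abar (α s) < r := by
      by_contra! hrt
      exact absurd hr.1 (not_lt.2 (le_inf hrt hrs.le))
    exact le_antisymm (alpha_le_of_abar_lt hαle hinv1 (habar _) hr0.le htr)
      (hαanti hr0.le hs hrs.le)
  · rfl
  · have hrt : r < abar (α s) := by
      by_contra! htr
      exact absurd hr.2 (not_lt.2 (sup_le htr hsr.le))
    exact le_antisymm (hαanti hs hr0.le hsr.le)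
      (le_alpha_of_lt_abar hinv2 (habar _) hr0.le ((hαle s hs).trans_lt hr0) hrt)

end Abar

theorem integral_Fs_sub_rate_nonneg {Fs : ℝ → ℝ → ℝ} {α a abar : ℝ → ℝ}
    (hmon : ∀ s : ℝ, 0 ≤ s → ∀ w w', w ≤ w' → w' < s →
      Fs w s / (s - w) ≤ Fs w' s / (s - w'))
    (hαle : ∀ s : ℝ, 0 ≤ s → α s ≤ 0) (ha_nonneg : ∀ w : ℝ, w < 0 → 0 ≤ a w)
    (hinv1 : ∀ w r : ℝ, w < 0 → a w < r → α r ≤ w)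
    (hinv2 : ∀ w r : ℝ, w < 0 → 0 ≤ r → r < a w → w ≤ α r)
    {w s : ℝ} (habar : abar w = if 0 ≤ w then w else a w) (hws : w ≤ s) (hs : 0 ≤ s) :
    0 ≤ ∫ r in abar w..s, (Fs w r - Fs (α r) r / (r - α r) * (r - w)) := by
  apply integral_nonneg_of_nonneg_Ioo_of_nonpos_Ioo
  · rintro r ⟨htr, -⟩
    have hr : 0 ≤ r := (abar_nonneg ha_nonneg habar).trans htr.le
    have hwr : w < r := (le_abar ha_nonneg habar).trans_lt htr
    have hcmp := hmon r hr (α r) w (alpha_le_of_abar_lt hαle hinv1 habar hr htr) hwr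
    rw [le_div_iff₀ (sub_pos.2 hwr)] at hcmp
    linarith
  · rintro r ⟨hsr, hrt⟩
    have hr : 0 < r := hs.trans_lt hsr
    have hwr : w < r := hws.trans_lt hsr
    have hcmp := hmon r hr.le w (α r) (le_alpha_of_lt_abar hinv2 habar hr.le hwr hrt)
      ((hαle r hr.le).trans_lt hr)
    rw [div_le_iff₀ (sub_pos.2 hwr)] at hcmp
    linarith

theorem integral_Fs_sub_rate_eq_zero_at_alpha {Fs : ℝ → ℝ → ℝ} {α a abar : ℝ → ℝ}
    (hαanti : AntitoneOn α (Ici (0 : ℝ)))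
    (hαle : ∀ s : ℝ, 0 ≤ s → α s ≤ 0) (ha_nonneg : ∀ w : ℝ, w < 0 → 0 ≤ a w)
    (hinv1 : ∀ w r : ℝ, w < 0 → a w < r → α r ≤ w)
    (hinv2 : ∀ w r : ℝ, w < 0 → 0 ≤ r → r < a w → w ≤ α r)
    (habar : ∀ w, abar w = if 0 ≤ w then w else a w) {s : ℝ} (hs : 0 ≤ s) :
    ∫ r in abar (α s)..s, (Fs (α s) r - Fs (α r) r / (r - α r) * (r - α s)) = 0 := by
  calc _ = ∫ _ in abar (α s)..s, (0 : ℝ) := integral_congr_uIoo fun r hr => by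
        have hr0 : 0 < r := (le_inf (abar_nonneg ha_nonneg (habar _)) hs).trans_lt hr.1
        rw [alpha_eq_of_mem_uIoo hαanti hαle ha_nonneg hinv1 hinv2 habar hs hr,
          div_mul_cancel₀ _ (sub_pos.2 ((hαle s hs).trans_lt hr0)).ne', sub_self]
    _ = 0 := integral_zero

/-- Lemma (F-MON↑, Perkins side): if `F_s(w,s)/(s-w)` is increasing in `w`,
`α⁺ : ℝ₊ → ℝ₋` is nonincreasing with inverse `a⁺`, and `ā(w) = w` for `w ≥ 0`,
`ā(w) = a⁺(w)` for `w < 0`, then with `λ_{α⁺}(r) = F_s(α⁺(r),r)/(r-α⁺(r))`,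
`Φ_{α⁺}(w,s) = ∫_0^s λ_{α⁺}(r)(r-w) dr` and
`ξ_{α⁺}(w) = F(w,ā(w)) - Φ_{α⁺}(w,ā(w))`, one has
`ξ_{α⁺}(w) + Φ_{α⁺}(w,s) ≤ F(w,s)` for all `w ≤ s`, with equality at `w = s`
and at `w = α⁺(s)`. -/
theorem stmt_10 (F Fs : ℝ → ℝ → ℝ)
    (hderiv : ∀ w s, w ≤ s → 0 ≤ s → HasDerivAt (F w) (Fs w s) s)
    (hcont : Continuous fun p : ℝ × ℝ => Fs p.1 p.2)
    (hmon : ∀ s : ℝ, 0 ≤ s → ∀ w w', w ≤ w' → w' < s →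
      Fs w s / (s - w) ≤ Fs w' s / (s - w'))
    (α a abar : ℝ → ℝ)
    (hαanti : AntitoneOn α (Ici (0 : ℝ)))
    (hαle : ∀ s : ℝ, 0 ≤ s → α s ≤ 0)
    (ha_nonneg : ∀ w : ℝ, w < 0 → 0 ≤ a w)
    (hinv1 : ∀ w r : ℝ, w < 0 → a w < r → α r ≤ w)
    (hinv2 : ∀ w r : ℝ, w < 0 → 0 ≤ r → r < a w → w ≤ α r)
    (habar : ∀ w, abar w = if 0 ≤ w then w else a w)
    (hint : ∀ w s : ℝ, 0 ≤ s →
      IntervalIntegrable (fun r => Fs (α r) r / (r - α r) * (r - w)) volume 0 s) :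
    ∀ w s : ℝ, w ≤ s → 0 ≤ s →
      ((F w (abar w) - ∫ r in (0 : ℝ)..(abar w), Fs (α r) r / (r - α r) * (r - w))
          + (∫ r in (0 : ℝ)..s, Fs (α r) r / (r - α r) * (r - w)) ≤ F w s) ∧
      (F s s =
        (F s (abar s) - ∫ r in (0 : ℝ)..(abar s), Fs (α r) r / (r - α r) * (r - s))
          + ∫ r in (0 : ℝ)..s, Fs (α r) r / (r - α r) * (r - s)) ∧
      (F (α s) s =
        (F (α s) (abar (α s))
            - ∫ r in (0 : ℝ)..(abar (α s)), Fs (α r) r / (r - α r) * (r - α s))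
          + ∫ r in (0 : ℝ)..s, Fs (α r) r / (r - α r) * (r - α s)) := by
  intro w s hws hs
  have gap (v : ℝ) (hvs : v ≤ s) := by
    have ht := abar_nonneg ha_nonneg (habar v)
    have hvt := le_abar ha_nonneg (habar v)
    exact sub_integral_add_integral_eq_sub_integral (f := F v)
      (fun r hr => hderiv v r ((le_inf hvt hvs).trans hr.1) ((le_inf ht hs).trans hr.1))
      ((hcont.comp (Continuous.prodMk_right v)).intervalIntegrable _ _) (hint v _ ht) (hint v s hs)
  refine ⟨?_, ?_, ?_⟩
  · rw [gap w hws]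
    linarith [integral_Fs_sub_rate_nonneg hmon hαle ha_nonneg hinv1 hinv2 (habar w) hws hs]
  · rw [habar s, if_pos hs]
    ring
  · rw [gap (α s) ((hαle s hs).trans hs),
      integral_Fs_sub_rate_eq_zero_at_alpha hαanti hαle ha_nonneg hinv1 hinv2 habar hs, sub_zero]
end

section
/- Let μ be a centred probability measure on ℝ (not the point mass at 0) with inverse barycentre function β_μ. If μ places positive mass on (x,∞) for some x > 0, then the function r ↦ 1/(r - β_μ(r)) is integrable on [0,x]. -/
open MeasureTheory Set

/-!
On `[0, x]` the gap `r - β r` is bounded below by a positive constant, so `1 / (r - β r)` is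
bounded there (and measurable, `β` being monotone). Writing `C` for the call function, the
argmin property tested at `y = β 0` gives `C (β r) ≤ M (r - β r)` with `M = C (β 0) / (-β 0)`,
while `C (β r) ≥ C x > 0` because `C` is antitone and `μ` charges `(x, ∞)`.
-/

/-- The call function `C_μ(y) = E[(X_μ - y)⁺]`. -/
noncomputable def callFunction (μ : Measure ℝ) (y : ℝ) : ℝ :=
  ∫ t, max (t - y) 0 ∂μ

namespace callFunction

variable {μ : Measure ℝ}

lemma integrable_posPart_sub [IsFiniteMeasure μ] (hint : Integrable id μ) (y : ℝ) :
    Integrable (fun t => max (t - y) 0) μ :=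
  (hint.sub (integrable_const y)).pos_part

lemma antitone [IsFiniteMeasure μ] (hint : Integrable id μ) : Antitone (callFunction μ) :=
  fun _ _ hyy' => integral_mono (integrable_posPart_sub hint _) (integrable_posPart_sub hint _)
    fun _ => max_le_max (by linarith) le_rfl

lemma pos [IsFiniteMeasure μ] (hint : Integrable id μ) {y : ℝ} (hmass : 0 < μ (Ioi y)) :
    0 < callFunction μ y := by
  refine (integral_pos_iff_support_of_nonneg (fun _ => le_max_right _ _)
    (integrable_posPart_sub hint y)).2 (hmass.trans_le (measure_mono fun t ht => ?_))
  exact (lt_max_of_lt_left (sub_pos.2 ht)).ne'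

end callFunction

lemma exists_pos_le_sub_of_isArgmin {C β : ℝ → ℝ} {x : ℝ} (hC : Antitone C) (hCx : 0 < C x)
    (hβlt : ∀ r : ℝ, 0 ≤ r → β r < r)
    (hargmin : ∀ r : ℝ, 0 ≤ r → ∀ y < r, C (β r) / (r - β r) ≤ C y / (r - y)) :
    ∃ ε > 0, ∀ r ∈ Icc 0 x, ε ≤ r - β r := by
  rcases lt_or_ge x 0 with hx | hx
  · exact ⟨1, one_pos, fun r hr => absurd (hr.1.trans hr.2) (not_le.2 hx)⟩
  have hβ0 : β 0 < 0 := hβlt 0 le_rfl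
  set M := C (β 0) / (0 - β 0)
  have hM : 0 < M := div_pos (hCx.trans_le (hC (hβ0.le.trans hx))) (by linarith)
  refine ⟨C x / M, div_pos hCx hM, fun r ⟨hr0, hrx⟩ => ?_⟩
  have hgap : 0 < r - β r := sub_pos.2 (hβlt r hr0)
  have hup : C (β r) ≤ M * (r - β r) := by
    rw [← div_le_iff₀ hgap]
    calc C (β r) / (r - β r) ≤ C (β 0) / (r - β 0) := hargmin r hr0 (β 0) (by linarith)
      _ ≤ M := div_le_div_of_nonneg_left (hCx.le.trans (hC (by linarith))) (by linarith)
        (by linarith)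
  rw [div_le_iff₀' hM]
  exact (hC ((hβlt r hr0).le.trans hrx)).trans hup

lemma integrableOn_one_div_sub_of_monotoneOn {β : ℝ → ℝ} {a b ε : ℝ}
    (hβ : MonotoneOn β (Icc a b)) (hε : 0 < ε) (hgap : ∀ r ∈ Icc a b, ε ≤ r - β r) :
    IntegrableOn (fun r => 1 / (r - β r)) (Icc a b) := by
  have hmeas : AEStronglyMeasurable (fun r => 1 / (r - β r)) (volume.restrict (Icc a b)) := by
    simp only [one_div]
    exact (aemeasurable_id.sub (aemeasurable_restrict_of_monotoneOn measurableSet_Icc hβ)).inv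
      |>.aestronglyMeasurable
  refine Integrable.mono' (integrable_const (1 / ε)) hmeas ?_
  filter_upwards [ae_restrict_mem measurableSet_Icc] with r hr
  rw [Real.norm_eq_abs, abs_of_pos (one_div_pos.2 (hε.trans_le (hgap r hr)))]
  exact one_div_le_one_div_of_le hε (hgap r hr)

theorem stmt_13_general (μ : Measure ℝ) [IsProbabilityMeasure μ]
    (hint : Integrable id μ)
    (β : ℝ → ℝ)
    (hβmono : MonotoneOn β (Ici (0 : ℝ)))
    (hβlt : ∀ r : ℝ, 0 ≤ r → β r < r)
    (hargmin : ∀ r : ℝ, 0 ≤ r → ∀ y < r,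
      (∫ x, max (x - β r) 0 ∂μ) / (r - β r) ≤ (∫ x, max (x - y) 0 ∂μ) / (r - y))
    (x : ℝ) (hmass : 0 < μ (Ioi x)) :
    IntegrableOn (fun r => 1 / (r - β r)) (Icc (0 : ℝ) x) volume := by
  obtain ⟨ε, hε, hgap⟩ := exists_pos_le_sub_of_isArgmin (C := callFunction μ)
    (callFunction.antitone hint) (callFunction.pos hint hmass) hβlt hargmin
  exact integrableOn_one_div_sub_of_monotoneOn (hβmono.mono Icc_subset_Ici_self) hε hgap

/-- Let μ be a centred probability measure on ℝ, not the point mass at 0, with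
inverse barycentre `β_μ` (the argmin of `y ↦ C_μ(y)/(r-y)` over `y < r`).
If μ places positive mass on `(x,∞)` for some `x > 0`, then
`r ↦ 1/(r - β_μ(r))` is integrable on `[0,x]`. -/
theorem stmt_13 (μ : Measure ℝ) [IsProbabilityMeasure μ]
    (hne : μ ≠ Measure.dirac 0)
    (hint : Integrable id μ) (hcent : (∫ x, x ∂μ) = 0)
    (β : ℝ → ℝ)
    (hβmono : MonotoneOn β (Ici (0 : ℝ)))
    (hβlt : ∀ r : ℝ, 0 ≤ r → β r < r)
    (hargmin : ∀ r : ℝ, 0 ≤ r → ∀ y < r,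
      (∫ x, max (x - β r) 0 ∂μ) / (r - β r) ≤ (∫ x, max (x - y) 0 ∂μ) / (r - y))
    (x : ℝ) (hx : 0 < x) (hmass : 0 < μ (Ioi x)) :
    IntegrableOn (fun r => 1 / (r - β r)) (Icc (0 : ℝ) x) volume :=
  stmt_13_general μ hint β hβmono hβlt hargmin x hmass
end

section
/- Let (μ_n) and μ be centred probability measures on ℝ such that μ_n converges weakly to μ and E[|X_{μ_n}|] → E[|X_μ|]. Then the barycentre functions converge: b_n(x) → b(x) at every continuity point x of b with x strictly below the upper limit of the support of μ. -/
/-!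
For a centred law, `(y - x)⁺ = ((y - x) + |y - x|) / 2` integrates to `C(x) = (∫ |y - x| - x) / 2`.
The potential `∫ |y - x|` converges because `y ↦ |y - x| - |y|` is bounded and continuous while
`∫ |y|` converges by assumption. The mass `μₙ [x, ∞)` converges by the portmanteau theorem, as the
frontier `{x}` of `[x, ∞)` is `μ`-null, and its limit is positive since `μ (x, ∞) > 0`.
-/

open MeasureTheory Set Filter Topology

lemma integral_max_sub_zero_eq_of_integral_id_eq_zero {ν : Measure ℝ} [IsProbabilityMeasure ν]
    (hint : Integrable id ν) (hcent : ∫ y, y ∂ν = 0) (x : ℝ) :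
    ∫ y, max (y - x) 0 ∂ν = (-x + ∫ y, |y - x| ∂ν) / 2 := by
  have hsub : Integrable (fun y => y - x) ν := hint.sub (integrable_const x)
  have hsub_integral : ∫ y, y - x ∂ν = -x := by
    rw [integral_sub (f := fun y => y) hint (integrable_const x), hcent]
    simp
  calc ∫ y, max (y - x) 0 ∂ν = ∫ y, ((y - x) + |y - x|) / 2 ∂ν := by
        congr 1 with y
        rcases le_total (y - x) 0 with h | h
        · rw [max_eq_right h, abs_of_nonpos h]; ring
        · rw [max_eq_left h, abs_of_nonneg h]; ring
    _ = (-x + ∫ y, |y - x| ∂ν) / 2 := by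
        rw [integral_div, integral_add hsub hsub.abs, hsub_integral]

noncomputable def absSubSubAbs (x : ℝ) : BoundedContinuousFunction ℝ ℝ :=
  .ofNormedAddCommGroup (fun y => |y - x| - |y|) (by fun_prop) |x| fun y => by
    simpa using abs_abs_sub_abs_le_abs_sub (y - x) y

lemma integral_absSubSubAbs {ν : Measure ℝ} [IsFiniteMeasure ν] (hint : Integrable id ν)
    (x : ℝ) : ∫ y, absSubSubAbs x y ∂ν = ∫ y, |y - x| ∂ν - ∫ y, |y| ∂ν :=
  integral_sub (hint.sub (integrable_const x)).abs hint.abs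

lemma tendsto_integral_abs_sub {ι : Type*} {l : Filter ι} {μs : ι → Measure ℝ} {μ : Measure ℝ}
    [∀ i, IsFiniteMeasure (μs i)] [IsFiniteMeasure μ]
    (hints : ∀ i, Integrable id (μs i)) (hint : Integrable id μ)
    (hweak : ∀ f : BoundedContinuousFunction ℝ ℝ,
      Tendsto (fun i => ∫ y, f y ∂μs i) l (𝓝 (∫ y, f y ∂μ)))
    (habs : Tendsto (fun i => ∫ y, |y| ∂μs i) l (𝓝 (∫ y, |y| ∂μ))) (x : ℝ) :
    Tendsto (fun i => ∫ y, |y - x| ∂μs i) l (𝓝 (∫ y, |y - x| ∂μ)) := by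
  have h := (hweak (absSubSubAbs x)).add habs
  simpa only [integral_absSubSubAbs (hints _), integral_absSubSubAbs hint, sub_add_cancel] using h

lemma tendsto_measure_of_null_frontier_of_forall_integral_tendsto {Ω ι : Type*}
    [MeasurableSpace Ω] [TopologicalSpace Ω] [OpensMeasurableSpace Ω] [HasOuterApproxClosed Ω]
    {l : Filter ι} {μs : ι → Measure Ω} {μ : Measure Ω}
    [∀ i, IsProbabilityMeasure (μs i)] [IsProbabilityMeasure μ]
    (hweak : ∀ f : BoundedContinuousFunction Ω ℝ,
      Tendsto (fun i => ∫ ω, f ω ∂μs i) l (𝓝 (∫ ω, f ω ∂μ)))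
    {E : Set Ω} (hE : μ (frontier E) = 0) :
    Tendsto (fun i => μs i E) l (𝓝 (μ E)) :=
  ProbabilityMeasure.tendsto_measure_of_null_frontier_of_tendsto'
    (μs := fun i => ⟨μs i, inferInstance⟩) (μ := ⟨μ, inferInstance⟩)
    (ProbabilityMeasure.tendsto_iff_forall_integral_tendsto.mpr hweak) hE

/-- If centred probability measures `μ_n` converge weakly to the centred
measure `μ` and `E[|X_{μ_n}|] → E[|X_μ|]`, then the barycentre functions
`b_ν(x) = x + C_ν(x)/ν([x,∞))` converge: `b_n(x) → b(x)` at every continuity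
point `x` of `b` (i.e. `μ({x}) = 0`) strictly below the upper limit of the
support of μ. -/
theorem stmt_14 (μn : ℕ → Measure ℝ) (μ : Measure ℝ)
    [∀ n, IsProbabilityMeasure (μn n)] [IsProbabilityMeasure μ]
    (hintn : ∀ n, Integrable id (μn n)) (hcentn : ∀ n, (∫ x, x ∂μn n) = 0)
    (hint : Integrable id μ) (hcent : (∫ x, x ∂μ) = 0)
    (hweak : ∀ f : BoundedContinuousFunction ℝ ℝ,
      Tendsto (fun n => ∫ x, f x ∂μn n) atTop (nhds (∫ x, f x ∂μ)))
    (habs : Tendsto (fun n => ∫ x, |x| ∂μn n) atTop (nhds (∫ x, |x| ∂μ)))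
    (x : ℝ) (hatom : μ {x} = 0) (hsupp : 0 < μ (Ioi x)) :
    Tendsto (fun n => x + (∫ y, max (y - x) 0 ∂μn n) / ((μn n) (Ici x)).toReal)
      atTop (nhds (x + (∫ y, max (y - x) 0 ∂μ) / (μ (Ici x)).toReal)) := by
  have hnum : Tendsto (fun n => ∫ y, max (y - x) 0 ∂μn n) atTop
      (𝓝 (∫ y, max (y - x) 0 ∂μ)) := by
    simp only [integral_max_sub_zero_eq_of_integral_id_eq_zero (hintn _) (hcentn _),
      integral_max_sub_zero_eq_of_integral_id_eq_zero hint hcent]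
    exact (tendsto_const_nhds.add (tendsto_integral_abs_sub hintn hint hweak habs x)).div_const 2
  have hden : Tendsto (fun n => (μn n (Ici x)).toReal) atTop (𝓝 (μ (Ici x)).toReal) :=
    (ENNReal.tendsto_toReal (measure_ne_top μ _)).comp
      (tendsto_measure_of_null_frontier_of_forall_integral_tendsto hweak
        (by rwa [frontier_Ici]))
  have hden_pos : 0 < (μ (Ici x)).toReal :=
    ENNReal.toReal_pos (hsupp.trans_le (measure_mono Ioi_subset_Ici_self)).ne'
      (measure_ne_top μ _)
  exact tendsto_const_nhds.add (hnum.div hden hden_pos.ne')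
end

section
/- Let a⁺: [0,1] → [1,2] be the inverse of α⁺(s) = s - 2√(s-1) (s ∈ [1,2]). Then (1/2)∫_0^1 (1 - x/a⁺(x))^2 dx = π/2 - 2 log 2. -/
open Set

noncomputable def F18 (x : ℝ) : ℝ :=
  -4 * Real.arctan (1 - Real.sqrt x)
    + 4 * (1 - Real.sqrt x) / (1 + (1 - Real.sqrt x) ^ 2)
    + 4 * Real.log (1 + (1 - Real.sqrt x) ^ 2)
    + 4 / (1 + (1 - Real.sqrt x) ^ 2)

lemma F18_deriv {x : ℝ} (hx : x ∈ Ioo (0 : ℝ) 1) :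
    HasDerivAt F18 ((1 - x / (x - 2 * Real.sqrt x + 2)) ^ 2) x := by
  have hx0 : 0 < x := hx.1
  have hsx : 0 < Real.sqrt x := Real.sqrt_pos.mpr hx0
  have hsq : Real.sqrt x ^ 2 = x := Real.sq_sqrt hx0.le
  set u := Real.sqrt x with hu
  have hden : 0 < 1 + (1 - u) ^ 2 := by positivity
  have hw : HasDerivAt (fun y => 1 - Real.sqrt y) (-(1 / (2 * Real.sqrt x))) x :=
    (Real.hasDerivAt_sqrt hx0.ne').const_sub 1
  have hd : HasDerivAt (fun y => 1 + (1 - Real.sqrt y) ^ 2)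
      (2 * (1 - u) * (-(1 / (2 * u)))) x := by
    have := (hw.pow 2).const_add (1 : ℝ)
    simpa [mul_comm, mul_assoc, mul_left_comm] using this
  have h1 : HasDerivAt (fun y => -4 * Real.arctan (1 - Real.sqrt y))
      (-4 * ((1 / (1 + (1 - u) ^ 2)) * (-(1 / (2 * u))))) x := by
    exact ((Real.hasDerivAt_arctan (1 - u)).comp x hw).const_mul (-4)
  have h2 : HasDerivAt (fun y => 4 * (1 - Real.sqrt y) / (1 + (1 - Real.sqrt y) ^ 2))
      ((4 * (-(1 / (2 * u))) * (1 + (1 - u) ^ 2)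
        - 4 * (1 - u) * (2 * (1 - u) * (-(1 / (2 * u))))) / (1 + (1 - u) ^ 2) ^ 2) x :=
    (hw.const_mul 4).div hd hden.ne'
  have h3 : HasDerivAt (fun y => 4 * Real.log (1 + (1 - Real.sqrt y) ^ 2))
      (4 * ((2 * (1 - u) * (-(1 / (2 * u)))) / (1 + (1 - u) ^ 2))) x :=
    (hd.log hden.ne').const_mul 4
  have h4 : HasDerivAt (fun y => 4 / (1 + (1 - Real.sqrt y) ^ 2))
      ((0 * (1 + (1 - u) ^ 2) - 4 * (2 * (1 - u) * (-(1 / (2 * u))))) / (1 + (1 - u) ^ 2) ^ 2) x :=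
    (hasDerivAt_const x (4 : ℝ)).div hd hden.ne'
  have H := ((h1.add h2).add h3).add h4
  have heq : (fun y => -4 * Real.arctan (1 - Real.sqrt y)
      + 4 * (1 - Real.sqrt y) / (1 + (1 - Real.sqrt y) ^ 2)
      + 4 * Real.log (1 + (1 - Real.sqrt y) ^ 2)
      + 4 / (1 + (1 - Real.sqrt y) ^ 2)) = F18 := rfl
  change HasDerivAt F18 _ x at H
  convert H using 1
  have hd2 : x - 2 * u + 2 = 1 + (1 - u) ^ 2 := by nlinarith
  rw [hd2, ← hsq]
  field_simp
  ring

/-- Variance swap lower bound computation for `X_T ∼ Uniform[0,2]`, `X_0 = 1`: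
with `a⁺ : [0,1] → [1,2]` the inverse of the Perkins boundary
`α⁺(s) = s - 2√(s-1)` (for `s ∈ [1,2]`), one has
`(1/2)∫_0^1 (1 - x/a⁺(x))² dx = π/2 - 2 log 2`. -/
theorem stmt_18 (a : ℝ → ℝ)
    (ha1 : ∀ s ∈ Icc (1 : ℝ) 2, a (s - 2 * Real.sqrt (s - 1)) = s)
    (ha2 : ∀ x ∈ Icc (0 : ℝ) 1,
      a x ∈ Icc (1 : ℝ) 2 ∧ a x - 2 * Real.sqrt (a x - 1) = x) :
    (1 / 2) * ∫ x in (0 : ℝ)..1, (1 - x / a x) ^ 2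
      = Real.pi / 2 - 2 * Real.log 2 := by
  have key : ∀ x ∈ Icc (0 : ℝ) 1, a x = x - 2 * Real.sqrt x + 2 := by
    intro x hx
    obtain ⟨hm, he⟩ := ha2 x hx
    have hs1 : (1 : ℝ) ≤ a x := hm.1
    have hs2 : a x ≤ 2 := hm.2
    have hu0 : 0 ≤ Real.sqrt (a x - 1) := Real.sqrt_nonneg _
    have hu1 : Real.sqrt (a x - 1) ≤ 1 := Real.sqrt_le_one.mpr (by linarith)
    have husq : Real.sqrt (a x - 1) ^ 2 = a x - 1 := Real.sq_sqrt (by linarith)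
    have hxe : x = (1 - Real.sqrt (a x - 1)) ^ 2 := by nlinarith
    have hsx : Real.sqrt x = 1 - Real.sqrt (a x - 1) := by
      have h := Real.sqrt_sq (show (0:ℝ) ≤ 1 - Real.sqrt (a x - 1) by linarith)
      rw [← hxe] at h
      exact h
    linarith
  have hcongr : ∫ x in (0 : ℝ)..1, (1 - x / a x) ^ 2
      = ∫ x in (0 : ℝ)..1, (1 - x / (x - 2 * Real.sqrt x + 2)) ^ 2 := by
    apply intervalIntegral.integral_congr
    intro x hx
    rw [Set.uIcc_of_le (by norm_num : (0:ℝ) ≤ 1)] at hx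
    simp only [key x hx]
  have hdenpos : ∀ x ∈ Icc (0 : ℝ) 1, 0 < x - 2 * Real.sqrt x + 2 := by
    intro x hx
    have h : Real.sqrt x ^ 2 = x := Real.sq_sqrt hx.1
    nlinarith [sq_nonneg (1 - Real.sqrt x)]
  have hcontF : ContinuousOn F18 (Icc 0 1) := by
    have hw : Continuous fun y : ℝ => 1 - Real.sqrt y := continuous_const.sub Real.continuous_sqrt
    have hc : Continuous fun y : ℝ => 1 + (1 - Real.sqrt y) ^ 2 := continuous_const.add (hw.pow 2)
    have hne : ∀ y : ℝ, (1 : ℝ) + (1 - Real.sqrt y) ^ 2 ≠ 0 := fun y => by positivity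
    have h1 : Continuous fun y : ℝ => -4 * Real.arctan (1 - Real.sqrt y) :=
      continuous_const.mul (Real.continuous_arctan.comp hw)
    have h2 : Continuous fun y : ℝ => 4 * (1 - Real.sqrt y) / (1 + (1 - Real.sqrt y) ^ 2) :=
      (continuous_const.mul hw).div hc hne
    have h3 : Continuous fun y : ℝ => 4 * Real.log (1 + (1 - Real.sqrt y) ^ 2) :=
      continuous_const.mul (hc.log hne)
    have h4 : Continuous fun y : ℝ => 4 / (1 + (1 - Real.sqrt y) ^ 2) :=
      continuous_const.div hc hne
    exact (((h1.add h2).add h3).add h4).continuousOn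
  have hcontf : ContinuousOn (fun x : ℝ => (1 - x / (x - 2 * Real.sqrt x + 2)) ^ 2) (Icc 0 1) := by
    apply ContinuousOn.pow
    apply ContinuousOn.sub continuousOn_const
    exact ContinuousOn.div continuousOn_id
      (Continuous.continuousOn ((continuous_id.sub (continuous_const.mul Real.continuous_sqrt)).add continuous_const))
      (fun x hx => (hdenpos x hx).ne')
  have hFTC : ∫ x in (0 : ℝ)..1, (1 - x / (x - 2 * Real.sqrt x + 2)) ^ 2 = F18 1 - F18 0 := by
    apply intervalIntegral.integral_eq_sub_of_hasDerivAt_of_le (by norm_num) hcontF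
    · intro x hx
      exact F18_deriv hx
    · exact (hcontf.mono (by rw [Set.uIcc_of_le (by norm_num : (0:ℝ) ≤ 1)])).intervalIntegrable
  rw [hcongr, hFTC]
  unfold F18
  rw [Real.sqrt_one, Real.sqrt_zero]
  norm_num [Real.arctan_one]
  ring
end

section
/- Let h: ℝ → ℝ be differentiable and strictly increasing, and F(w,s) a function with partial derivative F_s such that F_s(w,s)/(s-w) is nondecreasing in w (F-MON↑) and F_s > 0. If h is convex, then F̂(w,s) := F(h(w), h(s)) also satisfies F-MON↑, i.e. F̂_s(w,s)/(s-w) is nondecreasing in w for w < s. -/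
open Set

/-- The paper's condition F-MON↑ on a function `G w s` standing for `F_s(w, s)`. -/
def MonotoneDivSub (G : ℝ → ℝ → ℝ) : Prop :=
  ∀ s, MonotoneOn (fun w => G w s / (s - w)) (Iio s)

lemma MonotoneDivSub.mul_right {G : ℝ → ℝ → ℝ} (hG : MonotoneDivSub G) {c : ℝ → ℝ}
    (hc : ∀ s, 0 ≤ c s) : MonotoneDivSub fun w s => G w s * c s := by
  intro s w hw w' hw' hww'
  simp only [mul_div_right_comm _ (c s)]
  exact mul_le_mul_of_nonneg_right (hG s hw hw' hww') (hc s)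

lemma div_sub_eq_div_sub_mul_slope {h : ℝ → ℝ} {w s : ℝ} (hh : h w ≠ h s) (x : ℝ) :
    x / (s - w) = x / (h s - h w) * slope h w s := by
  rw [slope_def_field, div_mul_div_cancel₀ (sub_ne_zero.2 hh.symm)]

/-- The factorisation `G(h w, h s) / (s - w) = G(h w, h s) / (h s - h w) · slope h w s`
writes the new ratio as a product of two nonnegative factors nondecreasing in `w`: the first
by F-MON↑ for `G`, the second by convexity of `h`. -/
lemma MonotoneDivSub.comp {G : ℝ → ℝ → ℝ} (hG : MonotoneDivSub G)
    (hG₀ : ∀ w s, 0 ≤ G w s) {h : ℝ → ℝ} (hsm : StrictMono h) (hconv : ConvexOn ℝ univ h) :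
    MonotoneDivSub fun w s => G (h w) (h s) := by
  intro s w (hws : w < s) w' (hw's : w' < s) hww'
  have hhws : h w < h s := hsm hws
  have hhw's : h w' < h s := hsm hw's
  have hslope : slope h w s ≤ slope h w' s := by
    simpa only [slope_comm h s] using
      hconv.slope_mono (mem_univ s) ⟨mem_univ w, hws.ne⟩ ⟨mem_univ w', hw's.ne⟩ hww'
  calc G (h w) (h s) / (s - w)
      = G (h w) (h s) / (h s - h w) * slope h w s := div_sub_eq_div_sub_mul_slope hhws.ne _
    _ ≤ G (h w') (h s) / (h s - h w') * slope h w' s := by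
        refine mul_le_mul (hG (h s) hhws hhw's (hsm.monotone hww')) hslope ?_ ?_
        · exact (hsm.monotone.monotoneOn univ).slope_nonneg (mem_univ w) (mem_univ s)
        · exact div_nonneg (hG₀ _ _) (sub_pos.2 hhw's).le
    _ = G (h w') (h s) / (s - w') := (div_sub_eq_div_sub_mul_slope hhw's.ne _).symm

/-- If `h` is differentiable, strictly increasing and convex, and `F` satisfies
F-MON↑ (`F_s(w,s)/(s-w)` nondecreasing in `w`) with `F_s > 0`, then
`F̂(w,s) = F(h(w), h(s))` also satisfies F-MON↑. -/
theorem stmt_19 (F Fs : ℝ → ℝ → ℝ)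
    (hderiv : ∀ w s, HasDerivAt (F w) (Fs w s) s)
    (hmon : ∀ s : ℝ, ∀ w w', w ≤ w' → w' < s →
      Fs w s / (s - w) ≤ Fs w' s / (s - w'))
    (hFspos : ∀ w s, 0 < Fs w s)
    (h : ℝ → ℝ) (hdiff : Differentiable ℝ h) (hsm : StrictMono h)
    (hconv : ConvexOn ℝ univ h) :
    ∀ s : ℝ, ∀ w w', w ≤ w' → w' < s →
      deriv (fun t => F (h w) (h t)) s / (s - w)
        ≤ deriv (fun t => F (h w') (h t)) s / (s - w') := by
  intro s w w' hww' hw's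
  have hchain (v : ℝ) : deriv (fun t => F (h v) (h t)) s = Fs (h v) (h s) * deriv h s :=
    ((hderiv _ _).comp s (hdiff s).hasDerivAt).deriv
  have hFs : MonotoneDivSub Fs := fun s w _ w' hw's hww' => hmon s w w' hww' hw's
  have hhat : MonotoneDivSub fun w s => Fs (h w) (h s) * deriv h s :=
    (hFs.comp (fun w s => (hFspos w s).le) hsm hconv).mul_right
      fun _ => hsm.monotone.deriv_nonneg
  rw [hchain, hchain]
  exact hhat s (hww'.trans_lt hw's) hw's hww'
end
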